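/- Let J ⊆ I ⊊ R be ideals of a Noetherian commutative ring R. Any minimal prime ℘ of the Aluffi algebra 𝒜_{R↠R/J}(I/J) on Rees_R(I) is either of the form p̃ = ⊕_{t≥0} (p ∩ I^t) u^t for some minimal prime p of R/J on R, or else has the form (q, ℘₊), where q := ℘ ∩ R contains a minimal prime of R/I on R and ℘₊ = ℘ ∩ Rees_R(I)₊ is the part of ℘ of positive degrees. -/

import Mathlib

/-!
The Rees algebra is `ℕ`-graded by the degree in `u`, and the Aluffi ideal is generated by
elements of degrees `0` and `1`; hence each of its minimal primes `P` is homogeneous (the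
homogeneous core of `P` is again a prime over the Aluffi ideal). Put `q = P ∩ R`.
If `I ⊆ q`, homogeneity alone gives `P = (q, P₊)`. Otherwise pick `a ∈ I \ q`: for
`x = ∑ x_t u^t` with all `x_t ∈ q` we get `a^t · x_t u^t = x_t · (a u)^t ∈ P`, so `q̃ ⊆ P`.
As `q̃` is a prime containing the Aluffi ideal, minimality forces `P = q̃`; since `p ↦ p̃` is
monotone with `p̃ ∩ R = p`, minimality of `q̃` over the Aluffi ideal transfers to minimality of
`q` over `J`.
-/

open Polynomial

variable {R : Type*} [CommRing R]

/-- The defining ideal `(J, J̃)·Rees_R(I)` of the Aluffi algebra inside the Rees algebra. -/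
noncomputable def aluffiIdeal (I J : Ideal R) : Ideal (reesAlgebra I) :=
  Ideal.span {x : reesAlgebra I | ∃ a ∈ J, (x : R[X]) = C a ∨ (x : R[X]) = C a * X}

/-- The extended–contracted ideal `𝔭̃ = 𝔭R[u] ∩ Rees_R(I) = ⊕_{t≥0} (𝔭 ∩ I^t)u^t` of an
ideal `𝔭 ⊆ R` inside the Rees algebra of `I`. -/
noncomputable def tildeIdeal (I p : Ideal R) : Ideal (reesAlgebra I) :=
  Ideal.comap ((reesAlgebra I).val.toRingHom) (p.map (Polynomial.C : R →+* R[X]))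

/-- The irrelevant ideal `Rees_R(I)₊` of elements of the Rees algebra with zero constant
term (the positive-degree part). -/
noncomputable def reesPlus (I : Ideal R) : Ideal (reesAlgebra I) :=
  Ideal.comap ((reesAlgebra I).val.toRingHom)
    (RingHom.ker (Polynomial.evalRingHom (0 : R)))

open DirectSum

namespace reesAlgebra

variable (I : Ideal R)

theorem coeff_mem (x : reesAlgebra I) (n : ℕ) : (x : R[X]).coeff n ∈ I ^ n :=
  (mem_reesAlgebra_iff I _).1 x.2 n

noncomputable section

def grade (n : ℕ) : Submodule R (reesAlgebra I) :=
  (LinearMap.range (monomial n : R →ₗ[R] R[X])).comap (reesAlgebra I).val.toLinearMap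

variable {I} in
theorem mem_grade {n : ℕ} {x : reesAlgebra I} :
    x ∈ grade I n ↔ ∃ b, monomial n b = (x : R[X]) :=
  Iff.rfl

def component (n : ℕ) (x : reesAlgebra I) : grade I n :=
  ⟨⟨monomial n ((x : R[X]).coeff n), monomial_mem.2 (coeff_mem I x n)⟩, _, rfl⟩

@[simp]
theorem coe_component (n : ℕ) (x : reesAlgebra I) :
    ((component I n x : reesAlgebra I) : R[X]) = monomial n ((x : R[X]).coeff n) := rfl

instance : SetLike.GradedMonoid (grade I) where
  one_mem := ⟨1, by simp⟩
  mul_mem := by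
    intro i j x y hx hy
    obtain ⟨a, ha⟩ := mem_grade.1 hx
    obtain ⟨b, hb⟩ := mem_grade.1 hy
    exact mem_grade.2 ⟨a * b, by rw [Subalgebra.coe_mul, ← ha, ← hb, monomial_mul_monomial]⟩

def decomposeHom : reesAlgebra I →+ ⨁ n, grade I n where
  toFun x := DFinsupp.mk' (fun n => component I n x) <|
    Trunc.mk ⟨(x : R[X]).support.val, fun n => by
      by_cases h : n ∈ (x : R[X]).support
      · exact Or.inl h
      · right
        ext1; ext1
        simp [Polynomial.notMem_support_iff.1 h]⟩
  map_zero' := by ext; simp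
  map_add' x y := by ext; simp

theorem decomposeHom_apply (x : reesAlgebra I) (n : ℕ) : decomposeHom I x n = component I n x :=
  rfl

theorem component_of_mem_grade {i n : ℕ} {x : reesAlgebra I} (hx : x ∈ grade I i) :
    (component I n x : reesAlgebra I) = if i = n then x else 0 := by
  obtain ⟨b, hb⟩ := mem_grade.1 hx
  ext1
  split_ifs with h <;> simp [← hb, coeff_monomial, h]

instance gradedAlgebra : GradedAlgebra (grade I) where
  decompose' := decomposeHom I
  left_inv x := by
    classical
    have hsupp : (decomposeHom I x).support ⊆ (x : R[X]).support := by
      intro n hn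
      rw [DFinsupp.mem_support_iff] at hn
      rw [mem_support_iff]
      contrapose! hn
      ext1; ext1
      simp [decomposeHom_apply, hn]
    rw [coeAddMonoidHom_eq_dfinsuppSum, DFinsupp.sum_of_support_subset hsupp fun _ _ => rfl]
    ext1
    simp only [AddSubmonoidClass.coe_finsetSum, decomposeHom_apply, coe_component]
    exact (as_sum_support _).symm
  right_inv y := by
    induction y using DirectSum.induction_on with
    | zero => simp
    | of i x =>
      refine DirectSum.ext fun n => Subtype.ext ?_
      rw [coeAddMonoidHom_of, decomposeHom_apply, component_of_mem_grade I x.2,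
        DirectSum.of_apply]
      split_ifs with h
      · subst h; rfl
      · rfl
    | add x y hx hy => rw [map_add, map_add, hx, hy]

end

theorem decompose_apply (x : reesAlgebra I) (n : ℕ) :
    decompose (grade I) x n = component I n x :=
  rfl

theorem component_zero (x : reesAlgebra I) :
    (component I 0 x : reesAlgebra I) = algebraMap R (reesAlgebra I) ((x : R[X]).coeff 0) := by
  ext1
  simp

end reesAlgebra

theorem Ideal.IsHomogeneous.of_mem_minimalPrimes {ι σ A : Type*} [CommRing A] [AddCommMonoid ι]
    [LinearOrder ι] [IsOrderedCancelAddMonoid ι] [SetLike σ A] [AddSubmonoidClass σ A]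
    {𝒜 : ι → σ} [GradedRing 𝒜] {I P : Ideal A} (hI : I.IsHomogeneous 𝒜)
    (hP : P ∈ I.minimalPrimes) : P.IsHomogeneous 𝒜 := by
  have hcore_le : (P.homogeneousCore 𝒜).toIdeal ≤ P := P.toIdeal_homogeneousCore_le 𝒜
  have hI_le : I ≤ (P.homogeneousCore 𝒜).toIdeal :=
    hI.toIdeal_homogeneousCore_eq_self ▸ Ideal.homogeneousCore_mono 𝒜 hP.1.2
  rw [Ideal.IsHomogeneous.iff_eq]
  exact le_antisymm hcore_le (hP.2 ⟨hP.1.1.homogeneousCore, hI_le⟩ hcore_le)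

open reesAlgebra

section Rees

variable {I : Ideal R}

theorem Ideal.IsHomogeneous.eq_map_comap_sup_inf_reesPlus {P : Ideal (reesAlgebra I)}
    (hP : P.IsHomogeneous (grade I)) :
    P = (P.comap (algebraMap R (reesAlgebra I))).map (algebraMap R (reesAlgebra I)) ⊔
      (P ⊓ reesPlus I) := by
  refine le_antisymm (fun x hx => ?_) (sup_le Ideal.map_comap_le inf_le_left)
  set c := algebraMap R (reesAlgebra I) ((x : R[X]).coeff 0)
  have hc : c ∈ P := by simpa [decompose_apply, component_zero] using hP 0 hx
  have hxc : x - c ∈ reesPlus I := by simp [reesPlus, c, coeff_zero_eq_eval_zero]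
  rw [← add_sub_cancel c x]
  exact Submodule.add_mem_sup (Ideal.mem_map_of_mem _ hc) ⟨P.sub_mem hx hc, hxc⟩

theorem aluffiIdeal_isHomogeneous (J : Ideal R) : (aluffiIdeal I J).IsHomogeneous (grade I) := by
  refine Ideal.homogeneous_span _ _ ?_
  rintro x ⟨a, -, hx | hx⟩
  · exact ⟨0, mem_grade.2 ⟨a, by rw [hx, monomial_zero_left]⟩⟩
  · exact ⟨1, mem_grade.2 ⟨a, by rw [hx, C_mul_X_eq_monomial]⟩⟩

theorem mem_tildeIdeal {p : Ideal R} {x : reesAlgebra I} :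
    x ∈ tildeIdeal I p ↔ ∀ n, (x : R[X]).coeff n ∈ p :=
  Ideal.mem_map_C_iff

instance tildeIdeal.isPrime (p : Ideal R) [p.IsPrime] : (tildeIdeal I p).IsPrime :=
  Ideal.IsPrime.comap _

theorem tildeIdeal_mono : Monotone (tildeIdeal I) :=
  fun _ _ h => Ideal.comap_mono (Ideal.map_mono h)

theorem comap_algebraMap_tildeIdeal (p : Ideal R) :
    (tildeIdeal I p).comap (algebraMap R (reesAlgebra I)) = p := by
  ext a
  rw [Ideal.mem_comap, mem_tildeIdeal]
  refine ⟨fun h => by simpa using h 0, fun ha n => ?_⟩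
  simp only [Subalgebra.coe_algebraMap, algebraMap_eq, coeff_C]
  split_ifs
  exacts [ha, p.zero_mem]

theorem le_comap_aluffiIdeal (J : Ideal R) :
    J ≤ (aluffiIdeal I J).comap (algebraMap R (reesAlgebra I)) :=
  fun a ha => Ideal.subset_span ⟨a, ha, Or.inl rfl⟩

theorem aluffiIdeal_le_tildeIdeal {J p : Ideal R} (hJp : J ≤ p) :
    aluffiIdeal I J ≤ tildeIdeal I p := by
  rw [aluffiIdeal, Ideal.span_le]
  rintro x ⟨a, ha, hx | hx⟩ <;> rw [SetLike.mem_coe, mem_tildeIdeal, hx] <;> intro n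
  · rw [coeff_C]
    split_ifs
    exacts [hJp ha, p.zero_mem]
  · rw [coeff_C_mul_X]
    split_ifs
    exacts [hJp ha, p.zero_mem]

theorem tildeIdeal_comap_le {P : Ideal (reesAlgebra I)} [P.IsPrime] {a : R} (haI : a ∈ I)
    (haP : algebraMap R (reesAlgebra I) a ∉ P) :
    tildeIdeal I (P.comap (algebraMap R (reesAlgebra I))) ≤ P := by
  classical
  intro x hx
  rw [← DirectSum.sum_support_decompose (grade I) x]
  refine Ideal.sum_mem _ fun n _ => ?_
  let au : reesAlgebra I := ⟨monomial 1 a, monomial_mem.2 (by simpa using haI)⟩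
  have key : algebraMap R (reesAlgebra I) (a ^ n) * decompose (grade I) x n =
      algebraMap R (reesAlgebra I) ((x : R[X]).coeff n) * au ^ n := by
    ext1
    simp only [au, decompose_apply, Subalgebra.coe_mul, Subalgebra.coe_pow, coe_component,
      Subalgebra.coe_algebraMap, algebraMap_eq, monomial_pow, C_mul_monomial]
    rw [one_mul, mul_comm]
  have hprod : algebraMap R (reesAlgebra I) (a ^ n) * decompose (grade I) x n ∈ P :=
    key ▸ Ideal.mul_mem_right _ _ (mem_tildeIdeal.1 hx n)
  refine (Ideal.IsPrime.mem_or_mem ‹_› hprod).resolve_left fun h => haP ?_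
  exact Ideal.IsPrime.mem_of_pow_mem ‹_› n (by rwa [map_pow] at h)

theorem eq_tildeIdeal_of_mem_minimalPrimes {J : Ideal R} {P : Ideal (reesAlgebra I)}
    (hP : P ∈ (aluffiIdeal I J).minimalPrimes)
    (hIP : ¬ I ≤ P.comap (algebraMap R (reesAlgebra I))) :
    P = tildeIdeal I (P.comap (algebraMap R (reesAlgebra I))) := by
  have := hP.1.1
  obtain ⟨a, haI, haP⟩ := SetLike.not_le_iff_exists.1 hIP
  have hle := tildeIdeal_comap_le haI haP
  have hJP := (le_comap_aluffiIdeal J).trans (Ideal.comap_mono hP.1.2)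
  exact le_antisymm (hP.2 ⟨inferInstance, aluffiIdeal_le_tildeIdeal hJP⟩ hle) hle

theorem mem_minimalPrimes_of_tildeIdeal_mem_minimalPrimes {J q : Ideal R}
    (hq : tildeIdeal I q ∈ (aluffiIdeal I J).minimalPrimes) : q ∈ J.minimalPrimes := by
  have := hq.1.1
  have hq_prime : q.IsPrime := comap_algebraMap_tildeIdeal (I := I) q ▸ inferInstance
  have hJq : J ≤ q := comap_algebraMap_tildeIdeal (I := I) q ▸
    (le_comap_aluffiIdeal J).trans (Ideal.comap_mono hq.1.2)
  refine ⟨⟨hq_prime, hJq⟩, fun p hp hpq => ?_⟩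
  have := hp.1
  have hle := hq.2 ⟨inferInstance, aluffiIdeal_le_tildeIdeal hp.2⟩ (tildeIdeal_mono hpq)
  simpa only [comap_algebraMap_tildeIdeal] using
    Ideal.comap_mono (f := algebraMap R (reesAlgebra I)) hle

end Rees

theorem aluffi_minimal_primes_general (I J : Ideal R) :
    ∀ P ∈ (aluffiIdeal I J).minimalPrimes,
      (∃ p ∈ J.minimalPrimes, P = tildeIdeal I p) ∨
      ((∃ p ∈ I.minimalPrimes, p ≤ Ideal.comap (algebraMap R (reesAlgebra I)) P) ∧
        P = (Ideal.comap (algebraMap R (reesAlgebra I)) P).map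
              (algebraMap R (reesAlgebra I)) ⊔ (P ⊓ reesPlus I)) := by
  intro P hP
  have := hP.1.1
  by_cases hIP : I ≤ P.comap (algebraMap R (reesAlgebra I))
  · exact Or.inr ⟨Ideal.exists_minimalPrimes_le hIP,
      ((aluffiIdeal_isHomogeneous J).of_mem_minimalPrimes hP).eq_map_comap_sup_inf_reesPlus⟩
  · have hPeq := eq_tildeIdeal_of_mem_minimalPrimes hP hIP
    exact Or.inl ⟨_, mem_minimalPrimes_of_tildeIdeal_mem_minimalPrimes (hPeq ▸ hP), hPeq⟩

/-- every minimal prime `℘` of the Aluffi algebra on `Rees_R(I)` (i.e.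
minimal over the defining ideal `(J, J̃)Rees_R(I)`) is either of the form `p̃` for a
minimal prime `p` of `R/J` on `R`, or else `℘ = (q, ℘₊)` where `q = ℘ ∩ R` contains a
minimal prime of `R/I` on `R` and `℘₊ = ℘ ∩ Rees_R(I)₊`. -/
theorem aluffi_minimal_primes [IsNoetherianRing R]
    (I J : Ideal R) (hJI : J ≤ I) (hI : I ≠ ⊤) :
    ∀ P ∈ (aluffiIdeal I J).minimalPrimes,
      (∃ p ∈ J.minimalPrimes, P = tildeIdeal I p) ∨
      ((∃ p ∈ I.minimalPrimes, p ≤ Ideal.comap (algebraMap R (reesAlgebra I)) P) ∧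
        P = (Ideal.comap (algebraMap R (reesAlgebra I)) P).map
              (algebraMap R (reesAlgebra I)) ⊔ (P ⊓ reesPlus I)) :=
  aluffi_minimal_primes_general I J
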